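/- arXiv:0906.4255 — 3 statements merged into one kernel-verified Lean document; each statement's English description precedes it below -/
import Mathlib

section
/- Let (E_t, β_{s,t}) be a subproduct system of two-dimensional Hilbert spaces with a basis (x_t,y_t)_t of type E_1(a) where a ∈ (0,1) (i.e. a ≠ 0). Then every automorphism (θ_t)_t of (E_t,β) has one of the following two forms: there exists c ∈ ℝ such that θ_t x_t = e^{ict} x_t and θ_t y_t = e^{ict} y_t for all t, or there exists c ∈ ℝ such that θ_t x_t = e^{ict} y_t and θ_t y_t = e^{ict} x_t for all t. -/
noncomputable section

open scoped TensorProduct ComplexConjugate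

namespace SubprodHilbert

section TensorConstruction


variable {E F : Type*} [NormedAddCommGroup E] [InnerProductSpace ℂ E]
  [NormedAddCommGroup F] [InnerProductSpace ℂ F]

local notation "⟪" x ", " y "⟫" => @inner ℂ _ _ x y

/-- For fixed `u, v`, the ℂ-bilinear functional `(u', v') ↦ ⟪u,u'⟫ ⟪v,v'⟫`. -/
def innerAux (u : E) (v : F) : E →ₗ[ℂ] F →ₗ[ℂ] ℂ :=
  LinearMap.mk₂ ℂ (fun u' v' => ⟪u, u'⟫ * ⟪v, v'⟫)
    (fun m₁ m₂ n => by simp [inner_add_right]; ring)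
    (fun c m n => by simp [inner_smul_right]; ring)
    (fun m n₁ n₂ => by simp [inner_add_right]; ring)
    (fun c m n => by simp [inner_smul_right]; ring)

@[simp] lemma innerAux_apply (u u' : E) (v v' : F) :
    innerAux u v u' v' = ⟪u, u'⟫ * ⟪v, v'⟫ := rfl

/-- The (conjugate-linear-in-the-first-variable) map sending `z : E ⊗ F` to the linear
functional `w ↦ ⟪z, w⟫`. -/
def innerFunc : E ⊗[ℂ] F →+ (E ⊗[ℂ] F →ₗ[ℂ] ℂ) :=
  TensorProduct.liftAddHom
    (AddMonoidHom.mk'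
      (fun u => AddMonoidHom.mk' (fun v => TensorProduct.lift (innerAux u v))
        (fun v₁ v₂ => by
          apply TensorProduct.ext'
          intro u' v'
          simp [inner_add_left]
          ring))
      (fun u₁ u₂ => by
        ext v : 1
        apply TensorProduct.ext'
        intro u' v'
        simp [inner_add_left]
        ring))
    (fun c u v => by
      apply TensorProduct.ext'
      intro u' v'
      simp [inner_smul_left]
      ring)

@[simp] lemma innerFunc_tmul (u u' : E) (v v' : F) :
    innerFunc (u ⊗ₜ[ℂ] v) (u' ⊗ₜ[ℂ] v') = ⟪u, u'⟫ * ⟪v, v'⟫ := rfl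

lemma innerFunc_smul (c : ℂ) (z : E ⊗[ℂ] F) :
    innerFunc (c • z) = conj c • innerFunc z := by
  induction z using TensorProduct.induction_on with
  | zero => simp
  | tmul u v =>
      rw [TensorProduct.smul_tmul']
      apply TensorProduct.ext'
      intro u' v'
      simp [inner_smul_left]
      ring
  | add z₁ z₂ h₁ h₂ => rw [smul_add, map_add, map_add, h₁, h₂, smul_add]

lemma innerFunc_conj_symm (z w : E ⊗[ℂ] F) :
    conj (innerFunc w z) = innerFunc z w := by
  induction z using TensorProduct.induction_on with
  | zero => simp
  | tmul u v =>
      induction w using TensorProduct.induction_on with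
      | zero => simp
      | tmul u' v' =>
          simp only [innerFunc_tmul, map_mul, inner_conj_symm]
      | add w₁ w₂ h₁ h₂ => simp [map_add, h₁, h₂]
  | add z₁ z₂ h₁ h₂ => simp [map_add, h₁, h₂]

lemma exists_orthonormal_rep (z : E ⊗[ℂ] F) :
    ∃ (n : ℕ) (e : Fin n → E) (w : Fin n → F),
      Orthonormal ℂ e ∧ z = ∑ i, e i ⊗ₜ[ℂ] w i := by
  obtain ⟨S, rfl⟩ := TensorProduct.exists_finset z
  set U : Submodule ℂ E := Submodule.span ℂ (Prod.fst '' (S : Set (E × F))) with hU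
  haveI : FiniteDimensional ℂ U :=
    FiniteDimensional.span_of_finite ℂ (S.finite_toSet.image _)
  let b : OrthonormalBasis (Fin (Module.finrank ℂ U)) ℂ U := stdOrthonormalBasis ℂ U
  have hone : Orthonormal ℂ (fun i => (b i : E)) := by
    have hb := b.orthonormal
    constructor
    · intro i; simpa [norm] using hb.1 i
    · intro i j hij; simpa [Submodule.coe_inner] using hb.2 hij
  refine ⟨_, fun i => (b i : E), fun i => ∑ p ∈ S, ⟪(b i : E), p.1⟫ • p.2, hone, ?_⟩
  have key : ∀ p ∈ S, p.1 ⊗ₜ[ℂ] p.2 = ∑ i, ⟪(b i : E), p.1⟫ • ((b i : E) ⊗ₜ[ℂ] p.2) := by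
    intro p hp
    have hmem : p.1 ∈ U := Submodule.subset_span ⟨p, hp, rfl⟩
    have hrep : ((∑ i, (⟪b i, (⟨p.1, hmem⟩ : U)⟫ : ℂ) • b i : U) : E) = p.1 := by
      rw [b.sum_repr' ⟨p.1, hmem⟩]
    have h2 : ∀ i, (⟪b i, (⟨p.1, hmem⟩ : U)⟫ : ℂ) = ⟪(b i : E), p.1⟫ := fun i =>
      Submodule.coe_inner U (b i) ⟨p.1, hmem⟩
    have hrep' : p.1 = ∑ i, ⟪(b i : E), p.1⟫ • (b i : E) := by
      calc p.1 = ((∑ i, (⟪b i, (⟨p.1, hmem⟩ : U)⟫ : ℂ) • b i : U) : E) := hrep.symm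
        _ = ∑ i, (⟪b i, (⟨p.1, hmem⟩ : U)⟫ : ℂ) • (b i : E) := by push_cast; rfl
        _ = ∑ i, ⟪(b i : E), p.1⟫ • (b i : E) := Finset.sum_congr rfl fun i _ => by rw [h2]
    calc p.1 ⊗ₜ[ℂ] p.2 = (∑ i, ⟪(b i : E), p.1⟫ • (b i : E)) ⊗ₜ[ℂ] p.2 := by rw [← hrep']
      _ = ∑ i, ⟪(b i : E), p.1⟫ • ((b i : E) ⊗ₜ[ℂ] p.2) := by
          rw [TensorProduct.sum_tmul]
          refine Finset.sum_congr rfl fun i _ => ?_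
          rw [TensorProduct.smul_tmul']
  calc ∑ p ∈ S, p.1 ⊗ₜ[ℂ] p.2
      = ∑ p ∈ S, ∑ i, ⟪(b i : E), p.1⟫ • ((b i : E) ⊗ₜ[ℂ] p.2) :=
        Finset.sum_congr rfl key
    _ = ∑ i, ∑ p ∈ S, ⟪(b i : E), p.1⟫ • ((b i : E) ⊗ₜ[ℂ] p.2) := Finset.sum_comm
    _ = ∑ i, (b i : E) ⊗ₜ[ℂ] (∑ p ∈ S, ⟪(b i : E), p.1⟫ • p.2) := by
        refine Finset.sum_congr rfl fun i _ => ?_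
        rw [TensorProduct.tmul_sum]
        refine Finset.sum_congr rfl fun p _ => ?_
        rw [TensorProduct.tmul_smul]

lemma innerFunc_self (n : ℕ) (e : Fin n → E) (w : Fin n → F) (he : Orthonormal ℂ e) :
    innerFunc (∑ i, e i ⊗ₜ[ℂ] w i) (∑ i, e i ⊗ₜ[ℂ] w i) = ∑ i, ⟪w i, w i⟫ := by
  have hee : ∀ i j, (⟪e i, e j⟫ : ℂ) = if i = j then 1 else 0 := orthonormal_iff_ite.mp he
  simp only [map_sum, LinearMap.sum_apply, Finset.sum_apply, innerFunc_tmul, hee, ite_mul,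
    one_mul, zero_mul]
  rw [Finset.sum_comm]
  simp

/-- The inner-product-space core on the algebraic tensor product of two complex
inner product spaces, determined by `⟪u ⊗ v, u' ⊗ v'⟫ = ⟪u,u'⟫ ⟪v,v'⟫`. -/
def tensorCore : InnerProductSpace.Core ℂ (E ⊗[ℂ] F) where
  inner z w := innerFunc z w
  conj_inner_symm := innerFunc_conj_symm
  re_inner_nonneg z := by
    show 0 ≤ RCLike.re (innerFunc z z)
    obtain ⟨n, e, w, he, rfl⟩ := exists_orthonormal_rep z
    rw [innerFunc_self n e w he]
    rw [map_sum]
    exact Finset.sum_nonneg fun i _ => inner_self_nonneg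
  add_left z₁ z₂ w := by
    show innerFunc (z₁ + z₂) w = innerFunc z₁ w + innerFunc z₂ w
    rw [map_add]; rfl
  smul_left z w c := by
    show innerFunc (c • z) w = conj c * innerFunc z w
    rw [innerFunc_smul]; rfl
  definite z hz := by
    replace hz : innerFunc z z = 0 := hz
    obtain ⟨n, e, w, he, rfl⟩ := exists_orthonormal_rep z
    rw [innerFunc_self n e w he] at hz
    have hz' : ∑ i, (‖w i‖ ^ 2 : ℝ) = 0 := by
      have := congrArg Complex.re hz
      simpa [← @inner_self_eq_norm_sq ℂ] using this
    have hw : ∀ i ∈ Finset.univ, w i = 0 := by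
      intro i hi
      have h0 : (‖w i‖ ^ 2 : ℝ) = 0 :=
        (Finset.sum_eq_zero_iff_of_nonneg fun j _ => sq_nonneg _).mp hz' i hi
      simpa using h0
    calc ∑ i, e i ⊗ₜ[ℂ] w i = ∑ i : Fin n, (0 : E ⊗[ℂ] F) :=
          Finset.sum_congr rfl fun i hi => by rw [hw i hi, TensorProduct.tmul_zero]
      _ = 0 := Finset.sum_const_zero

instance tensorNormedAddCommGroup : NormedAddCommGroup (E ⊗[ℂ] F) :=
  @InnerProductSpace.Core.toNormedAddCommGroup ℂ _ _ _ _ tensorCore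

instance tensorInnerProductSpace : InnerProductSpace ℂ (E ⊗[ℂ] F) :=
  InnerProductSpace.ofCore tensorCore.toCore

@[simp] lemma inner_tmul (u u' : E) (v v' : F) :
    (inner ℂ (u ⊗ₜ[ℂ] v) (u' ⊗ₜ[ℂ] v') : ℂ) = ⟪u, u'⟫ * ⟪v, v'⟫ := rfl
end TensorConstruction


/-- Cast between the fibers of a family of inner product spaces along an equality of
indices, as a linear isometric isomorphism. -/
def castE {ι : Type*} (E : ι → Type*) [∀ t, NormedAddCommGroup (E t)]
    [∀ t, InnerProductSpace ℂ (E t)] {a b : ι} (h : a = b) : E a ≃ₗᵢ[ℂ] E b := by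
  subst h; exact LinearIsometryEquiv.refl ℂ (E a)


section Discrete

variable (E F : ℕ+ → Type*)
  [∀ t, NormedAddCommGroup (E t)] [∀ t, InnerProductSpace ℂ (E t)]
  [∀ t, NormedAddCommGroup (F t)] [∀ t, InnerProductSpace ℂ (F t)]
variable (β : ∀ s t : ℕ+, E (s + t) →ₗᵢ[ℂ] (E s ⊗[ℂ] E t))
variable (γ : ∀ s t : ℕ+, F (s + t) →ₗᵢ[ℂ] (F s ⊗[ℂ] F t))

/-- The associativity condition in the definition of a subproduct system. -/
def SubprodAssoc : Prop :=
  ∀ r s t : ℕ+, ∀ u : E (r + s + t),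
    (TensorProduct.assoc ℂ (E r) (E s) (E t))
      (TensorProduct.map (β r s).toLinearMap LinearMap.id (β (r + s) t u))
    = TensorProduct.map LinearMap.id (β s t).toLinearMap
        (β r (s + t) (castE E (add_assoc r s t) u))

/-- `(x, y)` is a basis of type `𝓔₁(a)` of the subproduct system `(E, β)`. -/
def IsBasisE1 (a : ℝ) (x y : ∀ t : ℕ+, E t) : Prop :=
  (∀ t, ‖x t‖ = 1) ∧ (∀ t, ‖y t‖ = 1) ∧
  (∀ t : ℕ+, (inner ℂ (x t) (y t) : ℂ) = (a : ℂ) ^ (t : ℕ)) ∧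
  (∀ s t : ℕ+, β s t (x (s + t)) = x s ⊗ₜ[ℂ] x t) ∧
  (∀ s t : ℕ+, β s t (y (s + t)) = y s ⊗ₜ[ℂ] y t)

/-- `(x, y)` is a basis of type `𝓔₂(a)` of the subproduct system `(E, β)`. -/
def IsBasisE2 (a : ℝ) (x y : ∀ t : ℕ+, E t) : Prop :=
  (∀ t, ‖x t‖ = 1) ∧ (∀ t, ‖y t‖ = 1) ∧
  (∀ t : ℕ+, (inner ℂ (x t) (y t) : ℂ) = (a : ℂ) ^ (t : ℕ)) ∧
  (∀ s t : ℕ+, Even (s : ℕ) → β s t (x (s + t)) = x s ⊗ₜ[ℂ] x t) ∧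
  (∀ s t : ℕ+, ¬ Even (s : ℕ) → β s t (x (s + t)) = x s ⊗ₜ[ℂ] y t) ∧
  (∀ s t : ℕ+, Even (s : ℕ) → β s t (y (s + t)) = y s ⊗ₜ[ℂ] y t) ∧
  (∀ s t : ℕ+, ¬ Even (s : ℕ) → β s t (y (s + t)) = y s ⊗ₜ[ℂ] x t)

/-- `(x, y)` is a basis of type `𝓔₃(λ)` of the subproduct system `(E, β)`. -/
def IsBasisE3 (l : ℂ) (x y : ∀ t : ℕ+, E t) : Prop :=
  (∀ t, ‖x t‖ = 1) ∧
  (∀ t : ℕ+, ‖y t‖ ^ 2 = ∑ k ∈ Finset.range (t : ℕ), ‖l‖ ^ (2 * k)) ∧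
  (∀ t : ℕ+, (inner ℂ (x t) (y t) : ℂ) = 0) ∧
  (∀ s t : ℕ+, β s t (x (s + t)) = x s ⊗ₜ[ℂ] x t) ∧
  (∀ s t : ℕ+, β s t (y (s + t)) = y s ⊗ₜ[ℂ] x t + l ^ (s : ℕ) • (x s ⊗ₜ[ℂ] y t))

/-- `(x, y)` is a basis of type `𝓔₄` of the subproduct system `(E, β)`. -/
def IsBasisE4 (x y : ∀ t : ℕ+, E t) : Prop :=
  (∀ t, ‖x t‖ = 1) ∧ (∀ t, ‖y t‖ = 1) ∧
  (∀ t : ℕ+, (inner ℂ (x t) (y t) : ℂ) = 0) ∧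
  (∀ s t : ℕ+, β s t (x (s + t)) = x s ⊗ₜ[ℂ] x t) ∧
  (∀ s t : ℕ+, β s t (y (s + t)) = y s ⊗ₜ[ℂ] x t)

/-- `(x, y)` is a basis of type `𝓔₅` of the subproduct system `(E, β)`. -/
def IsBasisE5 (x y : ∀ t : ℕ+, E t) : Prop :=
  (∀ t, ‖x t‖ = 1) ∧ (∀ t, ‖y t‖ = 1) ∧
  (∀ t : ℕ+, (inner ℂ (x t) (y t) : ℂ) = 0) ∧
  (∀ s t : ℕ+, β s t (x (s + t)) = x s ⊗ₜ[ℂ] x t) ∧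
  (∀ s t : ℕ+, β s t (y (s + t)) = x s ⊗ₜ[ℂ] y t)

/-- The five types of bases, together with their parameters. -/
inductive BType : Type
  | e1 (a : ℝ) | e2 (a : ℝ) | e3 (l : ℂ) | e4 | e5

/-- `(x, y)` is a basis of the subproduct system `(E, β)` of the given type (this includes
the admissibility constraints `a ∈ [0,1)`, resp. `λ ≠ 0`, on the parameter). -/
def IsBasisOfType : BType → (∀ t : ℕ+, E t) → (∀ t : ℕ+, E t) → Prop
  | .e1 a => fun x y => 0 ≤ a ∧ a < 1 ∧ IsBasisE1 E β a x y
  | .e2 a => fun x y => 0 ≤ a ∧ a < 1 ∧ IsBasisE2 E β a x y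
  | .e3 l => fun x y => l ≠ 0 ∧ IsBasisE3 E β l x y
  | .e4 => fun x y => IsBasisE4 E β x y
  | .e5 => fun x y => IsBasisE5 E β x y

/-- The family `θ` of unitaries intertwines the subproduct systems `(E, β)` and `(F, γ)`,
i.e. it is an isomorphism of subproduct systems. -/
def Intertwines (θ : ∀ t : ℕ+, E t ≃ₗᵢ[ℂ] F t) : Prop :=
  ∀ s t : ℕ+, ∀ w : E (s + t),
    γ s t (θ (s + t) w) =
      TensorProduct.map (θ s).toLinearEquiv.toLinearMap (θ t).toLinearEquiv.toLinearMap
        (β s t w)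

/-- The structure maps of the subproduct system `(E_{mt})_t` obtained by restricting
`(E, β)` to the multiples of `m`. -/
def restrictβ (m : ℕ+) :
    ∀ s t : ℕ+, E (m * (s + t)) →ₗᵢ[ℂ] (E (m * s) ⊗[ℂ] E (m * t)) := fun s t =>
  (β (m * s) (m * t)).comp (castE E (by rw [mul_add])).toLinearIsometry

end Discrete

/-! Both `t ↦ θ_t x_t` and `t ↦ θ_t y_t` are units of `(E, β)`, i.e. families with
`β_{s,t} z_{s+t} = z_s ⊗ z_t`. For a basis of type `𝓔₁(a)`, `0 ≤ a < 1`, every unit is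
`t ↦ c^t x_t` or `t ↦ c^t y_t`: writing `z_1 = α x_1 + γ y_1`, the vector
`z_1 ⊗ z_1 = β_{1,1} z_2` lies in the span of `x_1 ⊗ x_1` and `y_1 ⊗ y_1`, so `αγ = 0`, and a unit
is determined by `z_1`. Since `θ_1` is unitary, `|c| = 1`, and `⟨θ_1 x_1, θ_1 y_1⟩ = a` with
`0 < a < 1` rules out that `x` and `y` go to multiples of the same unit and forces equal
constants `c`. -/

section InnerProduct

variable {𝕜 V : Type*} [RCLike 𝕜] [NormedAddCommGroup V] [InnerProductSpace 𝕜 V]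

lemma linearIndependent_pair_of_norm_inner_lt_one {u v : V} (hu : ‖u‖ = 1) (hv : ‖v‖ = 1)
    (huv : ‖(inner 𝕜 u v : 𝕜)‖ < 1) : LinearIndependent 𝕜 ![u, v] := by
  refine (LinearIndependent.pair_iff' (norm_ne_zero_iff.mp (by simp [hu]))).mpr fun c hc => ?_
  subst hc
  have hc : ‖c‖ = 1 := by simpa [norm_smul, hu] using hv
  simp [inner_smul_right, inner_self_eq_norm_sq_to_K, hu, hc] at huv

lemma norm_inner_smul_smul_self (c c' : 𝕜) (u : V) :
    ‖(inner 𝕜 (c • u) (c' • u) : 𝕜)‖ = ‖c • u‖ * ‖c' • u‖ := by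
  simp [inner_smul_left, inner_smul_right, norm_smul, inner_self_eq_norm_sq_to_K]
  ring

lemma eq_of_inner_smul_smul_eq {u v : V} {c c' : 𝕜} (hc : ‖c‖ = 1)
    (huv : (inner 𝕜 u v : 𝕜) ≠ 0) (h : (inner 𝕜 (c • u) (c' • v) : 𝕜) = inner 𝕜 u v) :
    c' = c := by
  rw [inner_smul_left, inner_smul_right, ← mul_assoc] at h
  have hc' : conj c * c' = 1 := mul_right_cancel₀ huv (by rw [h, one_mul])
  have hcc : c * conj c = 1 := by rw [RCLike.mul_conj, hc]; simp
  linear_combination (-c') * hcc + c * hc'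

end InnerProduct

lemma _root_.Module.Basis.repr_mul_repr_eq_zero_of_tmul_self {ι R M : Type*} [CommSemiring R]
    [AddCommMonoid M] [Module R M] (b : Module.Basis ι R M) {i j : ι} (hij : i ≠ j) {u : M}
    {p q : R} (h : u ⊗ₜ[R] u = p • (b i ⊗ₜ b i) + q • (b j ⊗ₜ b j)) :
    b.repr u i * b.repr u j = 0 := by
  have := congrArg (fun w => (b.tensorProduct b).repr w (i, j)) h
  simpa [Finsupp.single_apply, hij, hij.symm, mul_comm] using this

lemma exists_exp_mul_eq_pow {c : ℂ} (hc : ‖c‖ = 1) :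
    ∃ r : ℝ, ∀ n : ℕ, Complex.exp (Complex.I * (r : ℂ) * (n : ℂ)) = c ^ n := by
  refine ⟨c.arg, fun n => ?_⟩
  rw [show Complex.I * (c.arg : ℂ) * (n : ℂ) = n * (c.arg * Complex.I) by ring,
    Complex.exp_nat_mul]
  congr 1
  simpa [hc] using Complex.norm_mul_exp_arg_mul_I c

section Units

variable {E F : ℕ+ → Type*}
  [∀ t, NormedAddCommGroup (E t)] [∀ t, InnerProductSpace ℂ (E t)]
  [∀ t, NormedAddCommGroup (F t)] [∀ t, InnerProductSpace ℂ (F t)]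
  {β : ∀ s t : ℕ+, E (s + t) →ₗᵢ[ℂ] (E s ⊗[ℂ] E t)}
  {γ : ∀ s t : ℕ+, F (s + t) →ₗᵢ[ℂ] (F s ⊗[ℂ] F t)}

def IsUnitFamily (β : ∀ s t : ℕ+, E (s + t) →ₗᵢ[ℂ] (E s ⊗[ℂ] E t)) (z : ∀ t, E t) : Prop :=
  ∀ s t : ℕ+, β s t (z (s + t)) = z s ⊗ₜ[ℂ] z t

lemma IsUnitFamily.map {θ : ∀ t, E t ≃ₗᵢ[ℂ] F t} (hθ : Intertwines E F β γ θ)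
    {z : ∀ t, E t} (hz : IsUnitFamily β z) : IsUnitFamily γ fun t => θ t (z t) := by
  intro s t
  rw [hθ, hz]
  rfl

lemma IsUnitFamily.eq_pow_smul {z w : ∀ t, E t} (hz : IsUnitFamily β z)
    (hw : IsUnitFamily β w) {c : ℂ} (h1 : z 1 = c • w 1) (t : ℕ+) :
    z t = c ^ (t : ℕ) • w t := by
  induction t using PNat.recOn with
  | one => simpa using h1
  | succ t ih =>
    apply (β t 1).injective
    rw [hz, ih, h1, map_smul, hw, TensorProduct.smul_tmul_smul, PNat.add_coe, PNat.one_coe,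
      pow_succ]

lemma IsBasisE1.linearIndependent {a : ℝ} (ha0 : 0 ≤ a) (ha1 : a < 1) {x y : ∀ t, E t}
    (hxy : IsBasisE1 E β a x y) (t : ℕ+) : LinearIndependent ℂ ![x t, y t] := by
  refine linearIndependent_pair_of_norm_inner_lt_one (hxy.1 t) (hxy.2.1 t) ?_
  rw [hxy.2.2.1 t, norm_pow, Complex.norm_of_nonneg ha0]
  exact pow_lt_one₀ ha0 ha1 t.ne_zero

lemma IsUnitFamily.exists_eq_pow_smul_of_isBasisE1 (hdim : ∀ t, Module.finrank ℂ (E t) = 2)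
    {a : ℝ} (ha0 : 0 ≤ a) (ha1 : a < 1) {x y : ∀ t, E t} (hxy : IsBasisE1 E β a x y)
    {z : ∀ t, E t} (hz : IsUnitFamily β z) :
    ∃ c : ℂ, (∀ t : ℕ+, z t = c ^ (t : ℕ) • x t) ∨ (∀ t : ℕ+, z t = c ^ (t : ℕ) • y t) := by
  have hx : IsUnitFamily β x := hxy.2.2.2.1
  have hy : IsUnitFamily β y := hxy.2.2.2.2
  let b t : Module.Basis (Fin 2) ℂ (E t) :=
    basisOfLinearIndependentOfCardEqFinrank (hxy.linearIndependent ha0 ha1 t) (by simp [hdim])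
  have hrepr t (u : E t) : u = (b t).repr u 0 • x t + (b t).repr u 1 • y t := by
    simpa [b, Fin.sum_univ_two] using ((b t).sum_repr u).symm
  obtain ⟨p, q, hz2⟩ : ∃ p q : ℂ, z (1 + 1) = p • x (1 + 1) + q • y (1 + 1) :=
    ⟨_, _, hrepr _ _⟩
  have hcross : (b 1).repr (z 1) 0 * (b 1).repr (z 1) 1 = 0 := by
    refine (b 1).repr_mul_repr_eq_zero_of_tmul_self (i := 0) (j := 1) (p := p) (q := q)
      (by decide) ?_
    rw [← hz, hz2, map_add, map_smul, map_smul, hx, hy]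
    simp [b]
  rcases mul_eq_zero.mp hcross with h | h
  · exact ⟨(b 1).repr (z 1) 1, Or.inr (hz.eq_pow_smul hy ((hrepr 1 (z 1)).trans (by simp [h])))⟩
  · exact ⟨(b 1).repr (z 1) 0, Or.inl (hz.eq_pow_smul hx ((hrepr 1 (z 1)).trans (by simp [h])))⟩

end Units

theorem statement3_general
    (E : ℕ+ → Type*) [∀ t, NormedAddCommGroup (E t)] [∀ t, InnerProductSpace ℂ (E t)]
    (hdim : ∀ t, Module.finrank ℂ (E t) = 2)
    (β : ∀ s t : ℕ+, E (s + t) →ₗᵢ[ℂ] (E s ⊗[ℂ] E t))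
    (a : ℝ) (ha0 : 0 < a) (ha1 : a < 1)
    (x y : ∀ t : ℕ+, E t) (hxy : IsBasisE1 E β a x y)
    (θ : ∀ t : ℕ+, E t ≃ₗᵢ[ℂ] E t) (hθ : Intertwines E E β β θ) :
    (∃ c : ℝ, ∀ t : ℕ+,
        θ t (x t) = Complex.exp (Complex.I * (c : ℂ) * ((t : ℕ) : ℂ)) • x t ∧
        θ t (y t) = Complex.exp (Complex.I * (c : ℂ) * ((t : ℕ) : ℂ)) • y t) ∨
    (∃ c : ℝ, ∀ t : ℕ+,
        θ t (x t) = Complex.exp (Complex.I * (c : ℂ) * ((t : ℕ) : ℂ)) • y t ∧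
        θ t (y t) = Complex.exp (Complex.I * (c : ℂ) * ((t : ℕ) : ℂ)) • x t) := by
  have hx : IsUnitFamily β x := hxy.2.2.2.1
  have hy : IsUnitFamily β y := hxy.2.2.2.2
  obtain ⟨c, hc⟩ := (hx.map hθ).exists_eq_pow_smul_of_isBasisE1 hdim ha0.le ha1 hxy
  obtain ⟨c', hc'⟩ := (hy.map hθ).exists_eq_pow_smul_of_isBasisE1 hdim ha0.le ha1 hxy
  have hxy1 : (inner ℂ (x 1) (y 1) : ℂ) = a := by simp [hxy.2.2.1 1]
  have hyx1 : (inner ℂ (y 1) (x 1) : ℂ) = a := by rw [← inner_conj_symm, hxy1, Complex.conj_ofReal]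
  have haC : (a : ℂ) ≠ 0 := by exact_mod_cast ha0.ne'
  have hinner : (inner ℂ (θ 1 (x 1)) (θ 1 (y 1)) : ℂ) = a := by
    rw [LinearIsometryEquiv.inner_map_map, hxy1]
  have hCS : ‖(inner ℂ (θ 1 (x 1)) (θ 1 (y 1)) : ℂ)‖ < ‖θ 1 (x 1)‖ * ‖θ 1 (y 1)‖ := by
    simp [hinner, abs_of_pos ha0, hxy.1 1, hxy.2.1 1, ha1]
  have hnorm : ‖c‖ = 1 := by
    have := (θ 1).norm_map (x 1)
    rcases hc with h | h <;> simpa [h 1, norm_smul, hxy.1 1, hxy.2.1 1] using this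
  obtain ⟨r, hr⟩ := exists_exp_mul_eq_pow hnorm
  rcases hc with hc | hc <;> rcases hc' with hc' | hc'
  · rw [hc 1, hc' 1, norm_inner_smul_smul_self] at hCS
    exact (lt_irrefl _ hCS).elim
  · have h1 := hinner.trans hxy1.symm
    rw [hc 1, hc' 1, PNat.one_coe, pow_one, pow_one] at h1
    have hcc : c' = c := eq_of_inner_smul_smul_eq hnorm (by rwa [hxy1]) h1
    exact Or.inl ⟨r, fun t => by simp [hr, hc t, hc' t, hcc]⟩
  · have h1 := hinner.trans hyx1.symm
    rw [hc 1, hc' 1, PNat.one_coe, pow_one, pow_one] at h1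
    have hcc : c' = c := eq_of_inner_smul_smul_eq hnorm (by rwa [hyx1]) h1
    exact Or.inr ⟨r, fun t => by simp [hr, hc t, hc' t, hcc]⟩
  · rw [hc 1, hc' 1, norm_inner_smul_smul_self] at hCS
    exact (lt_irrefl _ hCS).elim

/-- **Lemma 1.11, case `𝓔₁(a)`, `a ≠ 0`.** Every automorphism is a trivial automorphism,
possibly composed with the flip of the two units. -/
theorem statement3
    (E : ℕ+ → Type*) [∀ t, NormedAddCommGroup (E t)] [∀ t, InnerProductSpace ℂ (E t)]
    (hdim : ∀ t, Module.finrank ℂ (E t) = 2)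
    (β : ∀ s t : ℕ+, E (s + t) →ₗᵢ[ℂ] (E s ⊗[ℂ] E t))
    (hassoc : SubprodAssoc E β)
    (a : ℝ) (ha0 : 0 < a) (ha1 : a < 1)
    (x y : ∀ t : ℕ+, E t) (hxy : IsBasisE1 E β a x y)
    (θ : ∀ t : ℕ+, E t ≃ₗᵢ[ℂ] E t) (hθ : Intertwines E E β β θ) :
    (∃ c : ℝ, ∀ t : ℕ+,
        θ t (x t) = Complex.exp (Complex.I * (c : ℂ) * ((t : ℕ) : ℂ)) • x t ∧
        θ t (y t) = Complex.exp (Complex.I * (c : ℂ) * ((t : ℕ) : ℂ)) • y t) ∨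
    (∃ c : ℝ, ∀ t : ℕ+,
        θ t (x t) = Complex.exp (Complex.I * (c : ℂ) * ((t : ℕ) : ℂ)) • y t ∧
        θ t (y t) = Complex.exp (Complex.I * (c : ℂ) * ((t : ℕ) : ℂ)) • x t) :=
  statement3_general E hdim β a ha0 ha1 x y hxy θ hθ

end SubprodHilbert
end
end

section
/- Let (E_t, β_{s,t}) be a subproduct system of two-dimensional Hilbert spaces with a basis (x_t,y_t)_t of type E_3(λ), λ ∈ ℂ∖{0}. Then for every automorphism (θ_t)_t of (E_t,β) there exist c, b ∈ ℝ such that θ_t x_t = e^{ict} x_t and θ_t y_t = e^{ib} e^{ict} y_t for all t. -/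
noncomputable section

open scoped TensorProduct ComplexConjugate

namespace SubprodHilbert

section TensorConstruction


variable {E F : Type*} [NormedAddCommGroup E] [InnerProductSpace ℂ E]
  [NormedAddCommGroup F] [InnerProductSpace ℂ F]

local notation "⟪" x ", " y "⟫" => @inner ℂ _ _ x y

end TensorConstruction


/-! Pairing `β_{t,t}(θ x_{2t}) = θ x_t ⊗ θ x_t` with `y_t ⊗ y_t`, which is orthogonal to the range
of `β` (spanned by `x ⊗ x` and `y ⊗ x + λ^t x ⊗ y`), gives `⟪y_t, θ x_t⟫² = 0`; in dimension two
this forces `θ x_t = a_t x_t`, and then unitarity gives `θ y_t = d_t y_t`. Comparing coefficients in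
the intertwining relations for `x_{s+t}` and `y_{s+t}` yields `a_{s+t} = a_s a_t` and
`d_{s+t} = d_s a_t = a_s d_t`, hence `a_t = a_1^t` and `d_t = (d_1 / a_1) a_t`, all of modulus one. -/

section OrthogonalPair

variable {V : Type*} [NormedAddCommGroup V] [InnerProductSpace ℂ V]

lemma span_pair_eq_top_of_inner_eq_zero (hV : Module.finrank ℂ V = 2) {x y : V}
    (hx : x ≠ 0) (hy : y ≠ 0) (hxy : inner ℂ x y = (0 : ℂ)) :
    Submodule.span ℂ {x, y} = ⊤ := by
  have hli : LinearIndependent ℂ ![x, y] := by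
    refine linearIndependent_of_ne_zero_of_inner_eq_zero (fun i => ?_) fun i j hij => ?_
    · fin_cases i <;> simpa
    · fin_cases i <;> fin_cases j <;> simp_all [inner_eq_zero_symm]
  rw [← Matrix.range_cons_cons_empty]
  exact hli.span_eq_top_of_card_eq_finrank (by simp [hV])

lemma exists_eq_smul_of_inner_eq_zero (hV : Module.finrank ℂ V = 2) {x y v : V}
    (hx : x ≠ 0) (hy : y ≠ 0) (hxy : inner ℂ x y = (0 : ℂ)) (hv : inner ℂ y v = (0 : ℂ)) :
    ∃ c : ℂ, v = c • x := by
  obtain ⟨c, d, rfl⟩ := Submodule.mem_span_pair.mp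
    ((span_pair_eq_top_of_inner_eq_zero hV hx hy hxy).symm ▸ Submodule.mem_top : v ∈ _)
  have hd : d = 0 := by simpa [inner_eq_zero_symm.mp hxy, hy] using hv
  exact ⟨c, by simp [hd]⟩

lemma exists_map_eq_smul_of_map_eq_smul (θ : V ≃ₗᵢ[ℂ] V)
    (hV : Module.finrank ℂ V = 2) {x y : V} (hx : x ≠ 0) (hy : y ≠ 0)
    (hxy : inner ℂ x y = (0 : ℂ)) {a : ℂ} (ha : a ≠ 0) (hθx : θ x = a • x) :
    ∃ d : ℂ, θ y = d • y := by
  have hxθy : inner ℂ x (θ y) = (0 : ℂ) := by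
    have h := θ.inner_map_map x y
    rw [hθx, inner_smul_left, hxy] at h
    exact (mul_eq_zero.mp h).resolve_left (by simpa using ha)
  exact exists_eq_smul_of_inner_eq_zero hV hy hx (inner_eq_zero_symm.mp hxy) hxθy

end OrthogonalPair

lemma norm_eq_one_of_map_eq_smul {𝕜 V : Type*} [NormedField 𝕜] [NormedAddCommGroup V]
    [NormedSpace 𝕜 V] (θ : V →ₗᵢ[𝕜] V) {v : V} (hv : v ≠ 0) {c : 𝕜} (h : θ v = c • v) :
    ‖c‖ = 1 := by
  have := θ.norm_map v
  rw [h, norm_smul] at this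
  exact (mul_eq_right₀ (norm_ne_zero_iff.mpr hv)).mp this

lemma exists_exp_mul_I_eq_of_norm_eq_one {z : ℂ} (hz : ‖z‖ = 1) :
    ∃ b : ℝ, Complex.exp (Complex.I * b) = z :=
  ⟨z.arg, by simpa [hz, mul_comm] using Complex.norm_mul_exp_arg_mul_I z⟩

lemma exists_eq_exp_of_add_eq_mul {a : ℕ+ → ℂ} (ha : ‖a 1‖ = 1)
    (hmul : ∀ s t, a (s + t) = a s * a t) :
    ∃ c : ℝ, ∀ t : ℕ+, a t = Complex.exp (Complex.I * c * ((t : ℕ) : ℂ)) := by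
  obtain ⟨c, hc⟩ := exists_exp_mul_I_eq_of_norm_eq_one ha
  refine ⟨c, fun t => ?_⟩
  rw [mul_comm _ ((t : ℕ) : ℂ), Complex.exp_nat_mul, hc]
  induction t using PNat.recOn with
  | one => simp
  | succ n ih => rw [hmul, ih, PNat.add_coe, PNat.one_coe, pow_succ]

section Automorphism

variable {E : ℕ+ → Type*} [∀ t, NormedAddCommGroup (E t)] [∀ t, InnerProductSpace ℂ (E t)]
  {β : ∀ s t : ℕ+, E (s + t) →ₗᵢ[ℂ] (E s ⊗[ℂ] E t)} {θ : ∀ t : ℕ+, E t ≃ₗᵢ[ℂ] E t}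

lemma Intertwines.map_tmul (hθ : Intertwines E E β β θ) (s t : ℕ+) {w : E (s + t)}
    {u : E s} {v : E t} (hw : β s t w = u ⊗ₜ[ℂ] v) :
    β s t (θ (s + t) w) = θ s u ⊗ₜ[ℂ] θ t v := by
  rw [hθ, hw, TensorProduct.map_tmul]
  rfl

lemma Intertwines.eigenvalue_add_eq_mul (hθ : Intertwines E E β β θ) {u : ∀ t, E t}
    (hu : ∀ t, u t ≠ 0) (hβu : ∀ s t, β s t (u (s + t)) = u s ⊗ₜ[ℂ] u t) {a : ℕ+ → ℂ}
    (ha : ∀ t, θ t (u t) = a t • u t) (s t : ℕ+) : a (s + t) = a s * a t := by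
  have h : β s t (a (s + t) • u (s + t)) = β s t ((a s * a t) • u (s + t)) := by
    rw [← ha, hθ.map_tmul s t (hβu s t), ha, ha, map_smul, hβu, TensorProduct.smul_tmul_smul]
  exact smul_left_injective ℂ (hu _) ((β s t).injective h)

namespace IsBasisE3

variable {l : ℂ} {x y : ∀ t : ℕ+, E t}

lemma x_ne_zero (hxy : IsBasisE3 E β l x y) (t : ℕ+) : x t ≠ 0 :=
  norm_ne_zero_iff.mp (by simp [hxy.1 t])

lemma y_ne_zero (hxy : IsBasisE3 E β l x y) (t : ℕ+) : y t ≠ 0 := by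
  refine norm_ne_zero_iff.mp fun h => ?_
  have h1 : (1 : ℝ) ≤ ‖y t‖ ^ 2 := by
    rw [hxy.2.1 t]
    simpa using Finset.single_le_sum (fun k _ => by positivity : ∀ k ∈ Finset.range (t : ℕ),
      0 ≤ ‖l‖ ^ (2 * k)) (Finset.mem_range.mpr t.pos)
  norm_num [h] at h1

lemma innerFunc_y_tmul_y_map_eq_zero (hxy : IsBasisE3 E β l x y)
    (hdim : ∀ t, Module.finrank ℂ (E t) = 2) (s t : ℕ+) (w : E (s + t)) :
    innerFunc (y s ⊗ₜ[ℂ] y t) (β s t w) = 0 := by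
  obtain ⟨p, q, rfl⟩ := Submodule.mem_span_pair.mp
    ((span_pair_eq_top_of_inner_eq_zero (hdim _) (hxy.x_ne_zero _) (hxy.y_ne_zero _)
      (hxy.2.2.1 _)).symm ▸ Submodule.mem_top : w ∈ _)
  obtain ⟨-, -, hxy0, hβx, hβy⟩ := hxy
  simp [hβx, hβy, inner_eq_zero_symm.mp (hxy0 _)]

lemma exists_map_x_eq_smul (hxy : IsBasisE3 E β l x y)
    (hdim : ∀ t, Module.finrank ℂ (E t) = 2) (hθ : Intertwines E E β β θ) (t : ℕ+) :
    ∃ a : ℂ, θ t (x t) = a • x t := by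
  have hyθx : inner ℂ (y t) (θ t (x t)) = (0 : ℂ) := by
    have h := hxy.innerFunc_y_tmul_y_map_eq_zero hdim t t (θ (t + t) (x (t + t)))
    rw [hθ.map_tmul t t (hxy.2.2.2.1 t t), innerFunc_tmul, ← sq] at h
    exact pow_eq_zero_iff two_ne_zero |>.mp h
  exact exists_eq_smul_of_inner_eq_zero (hdim t) (hxy.x_ne_zero t) (hxy.y_ne_zero t)
    (hxy.2.2.1 t) hyθx

lemma eigenvalue_y_add_eq_mul (hxy : IsBasisE3 E β l x y) (hl : l ≠ 0)
    (hθ : Intertwines E E β β θ) {a d : ℕ+ → ℂ} (hxa : ∀ t, θ t (x t) = a t • x t)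
    (hyd : ∀ t, θ t (y t) = d t • y t) (s t : ℕ+) :
    d (s + t) = d s * a t ∧ d (s + t) = a s * d t := by
  have hy := hxy.y_ne_zero
  obtain ⟨hx1, -, hxy0, -, hβy⟩ := hxy
  have h : d (s + t) • (y s ⊗ₜ[ℂ] x t + l ^ (s : ℕ) • (x s ⊗ₜ[ℂ] y t)) =
      (d s * a t) • (y s ⊗ₜ[ℂ] x t) + (l ^ (s : ℕ) * (a s * d t)) • (x s ⊗ₜ[ℂ] y t) := by
    have h := hθ s t (y (s + t))
    rw [hyd, map_smul, hβy, map_add, map_smul, TensorProduct.map_tmul,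
      TensorProduct.map_tmul] at h
    simp only [LinearEquiv.coe_coe, LinearIsometryEquiv.coe_toLinearEquiv, hxa, hyd,
      TensorProduct.smul_tmul_smul] at h
    rw [h]
    module
  have hyx0 := fun t => inner_eq_zero_symm.mp (hxy0 t)
  constructor
  · have h1 := congrArg (innerFunc (y s ⊗ₜ[ℂ] x t)) h
    simpa [hxy0, hyx0, hx1, hy s] using h1
  · have h2 := congrArg (innerFunc (x s ⊗ₜ[ℂ] y t)) h
    simp only [map_add, map_smul, innerFunc_tmul, hxy0, hyx0, inner_self_eq_norm_sq_to_K,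
      hx1, smul_eq_mul, RCLike.ofReal_one] at h2
    have hN : l ^ (s : ℕ) * (‖y t‖ : ℂ) ^ 2 ≠ 0 := by simp [hl, hy t]
    exact mul_right_cancel₀ hN (by linear_combination h2)

end IsBasisE3

end Automorphism

theorem statement5_general
    (E : ℕ+ → Type*) [∀ t, NormedAddCommGroup (E t)] [∀ t, InnerProductSpace ℂ (E t)]
    (hdim : ∀ t, Module.finrank ℂ (E t) = 2)
    (β : ∀ s t : ℕ+, E (s + t) →ₗᵢ[ℂ] (E s ⊗[ℂ] E t))
    (l : ℂ) (hl : l ≠ 0)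
    (x y : ∀ t : ℕ+, E t) (hxy : IsBasisE3 E β l x y)
    (θ : ∀ t : ℕ+, E t ≃ₗᵢ[ℂ] E t) (hθ : Intertwines E E β β θ) :
    ∃ c b : ℝ, ∀ t : ℕ+,
      θ t (x t) = Complex.exp (Complex.I * (c : ℂ) * ((t : ℕ) : ℂ)) • x t ∧
      θ t (y t) = (Complex.exp (Complex.I * (b : ℂ)) *
        Complex.exp (Complex.I * (c : ℂ) * ((t : ℕ) : ℂ))) • y t := by
  choose a hxa using hxy.exists_map_x_eq_smul hdim hθ
  have ha : ∀ t, ‖a t‖ = 1 := fun t =>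
    norm_eq_one_of_map_eq_smul (θ t).toLinearIsometry (hxy.x_ne_zero t) (hxa t)
  have ha0 : ∀ t, a t ≠ 0 := fun t => norm_ne_zero_iff.mp (by simp [ha t])
  choose d hyd using fun t => exists_map_eq_smul_of_map_eq_smul (θ t) (hdim t)
    (hxy.x_ne_zero t) (hxy.y_ne_zero t) (hxy.2.2.1 t) (ha0 t) (hxa t)
  have hd : ‖d 1‖ = 1 :=
    norm_eq_one_of_map_eq_smul (θ 1).toLinearIsometry (hxy.y_ne_zero 1) (hyd 1)
  have hda : ∀ t, d t = d 1 / a 1 * a t := fun t => by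
    obtain ⟨h₁, h₂⟩ := hxy.eigenvalue_y_add_eq_mul hl hθ hxa hyd 1 t
    field_simp [ha0 1]
    linear_combination h₂.symm.trans h₁
  obtain ⟨c, hc⟩ := exists_eq_exp_of_add_eq_mul (ha 1)
    (hθ.eigenvalue_add_eq_mul hxy.x_ne_zero hxy.2.2.2.1 hxa)
  obtain ⟨b, hb⟩ := exists_exp_mul_I_eq_of_norm_eq_one (z := d 1 / a 1) (by simp [hd, ha 1])
  exact ⟨c, b, fun t => ⟨by rw [hxa, hc], by rw [hyd, hda, ← hb, hc]⟩⟩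

/-- **Lemma 1.11, case `𝓔₃(λ)`.** -/
theorem statement5
    (E : ℕ+ → Type*) [∀ t, NormedAddCommGroup (E t)] [∀ t, InnerProductSpace ℂ (E t)]
    (hdim : ∀ t, Module.finrank ℂ (E t) = 2)
    (β : ∀ s t : ℕ+, E (s + t) →ₗᵢ[ℂ] (E s ⊗[ℂ] E t))
    (hassoc : SubprodAssoc E β)
    (l : ℂ) (hl : l ≠ 0)
    (x y : ∀ t : ℕ+, E t) (hxy : IsBasisE3 E β l x y)
    (θ : ∀ t : ℕ+, E t ≃ₗᵢ[ℂ] E t) (hθ : Intertwines E E β β θ) :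
    ∃ c b : ℝ, ∀ t : ℕ+,
      θ t (x t) = Complex.exp (Complex.I * (c : ℂ) * ((t : ℕ) : ℂ)) • x t ∧
      θ t (y t) = (Complex.exp (Complex.I * (b : ℂ)) *
        Complex.exp (Complex.I * (c : ℂ) * ((t : ℕ) : ℂ))) • y t :=
  statement5_general E hdim β l hl x y hxy θ hθ

end SubprodHilbert
end
end

section
/- Let (E_t, β_{s,t}) be a subproduct system of two-dimensional Hilbert spaces with a basis (x_t,y_t)_t of type E_4. Then for every automorphism (θ_t)_t of (E_t,β) there exist c, b ∈ ℝ such that θ_t x_t = e^{ict} x_t and θ_t y_t = e^{ib} e^{ict} y_t for all t. -/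
/-!
Evaluating the intertwining relation on the product vectors `β(x_{s+t}) = x_s ⊗ x_t` and
`β(y_{s+t}) = y_s ⊗ x_t` shows that the matrix coefficients `a_t = ⟪x_t, θ x_t⟫`,
`f_t = ⟪y_t, θ x_t⟫` and `d_t = ⟪y_t, θ y_t⟫` satisfy `a_{s+t} = a_s a_t`, `f_{s+t} = f_s a_t`
and `d_{s+t} = d_s a_t`. Unitarity of `θ_t` and `θ_{2t}` then gives `|a_t| = 1`, so `θ_t` is
diagonal in the basis `(x_t, y_t)`, with `a_t = a_1^t` and `d_t = (d_1 / a_1) a_t`.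
-/

noncomputable section

open scoped TensorProduct ComplexConjugate

namespace SubprodHilbert

section TensorConstruction


variable {E F : Type*} [NormedAddCommGroup E] [InnerProductSpace ℂ E]
  [NormedAddCommGroup F] [InnerProductSpace ℂ F]

local notation "⟪" x ", " y "⟫" => @inner ℂ _ _ x y

end TensorConstruction


end SubprodHilbert

section Orthonormal

variable {𝕜 G ι : Type*} [RCLike 𝕜] [NormedAddCommGroup G] [InnerProductSpace 𝕜 G]
  [Fintype ι] [Nonempty ι] {v : ι → G}

local notation "⟪" x ", " y "⟫" => @inner 𝕜 _ _ x y

lemma Orthonormal.exists_orthonormalBasis_of_card_eq_finrank (hv : Orthonormal 𝕜 v)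
    (hcard : Fintype.card ι = Module.finrank 𝕜 G) : ∃ b : OrthonormalBasis ι 𝕜 G, ⇑b = v :=
  ⟨(basisOfOrthonormalOfCardEqFinrank hv hcard).toOrthonormalBasis (by simpa using hv),
    by simp⟩

lemma Orthonormal.sum_inner_smul_eq_of_card_eq_finrank (hv : Orthonormal 𝕜 v)
    (hcard : Fintype.card ι = Module.finrank 𝕜 G) (w : G) : ∑ i, ⟪v i, w⟫ • v i = w := by
  obtain ⟨b, rfl⟩ := hv.exists_orthonormalBasis_of_card_eq_finrank hcard
  exact b.sum_repr' w

lemma Orthonormal.sum_sq_norm_inner_eq_of_card_eq_finrank (hv : Orthonormal 𝕜 v)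
    (hcard : Fintype.card ι = Module.finrank 𝕜 G) (w : G) : ∑ i, ‖⟪v i, w⟫‖ ^ 2 = ‖w‖ ^ 2 := by
  obtain ⟨b, rfl⟩ := hv.exists_orthonormalBasis_of_card_eq_finrank hcard
  exact b.sum_sq_norm_inner_right w

end Orthonormal

section TwoDimensional

variable {G : Type*} [NormedAddCommGroup G] [InnerProductSpace ℂ G]
  (h2 : Module.finrank ℂ G = 2) {x y : G} (hxy : Orthonormal ℂ ![x, y])
include h2 hxy

local notation "⟪" x ", " y "⟫" => @inner ℂ _ _ x y

lemma eq_inner_smul_add_inner_smul_of_finrank_eq_two (w : G) :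
    w = ⟪x, w⟫ • x + ⟪y, w⟫ • y := by
  simpa [Fin.sum_univ_two] using
    (hxy.sum_inner_smul_eq_of_card_eq_finrank (by simp [h2]) w).symm

lemma norm_sq_inner_add_norm_sq_inner_of_finrank_eq_two (w : G) :
    ‖⟪x, w⟫‖ ^ 2 + ‖⟪y, w⟫‖ ^ 2 = ‖w‖ ^ 2 := by
  simpa [Fin.sum_univ_two] using hxy.sum_sq_norm_inner_eq_of_card_eq_finrank (by simp [h2]) w

lemma LinearIsometryEquiv.map_eq_smul_of_norm_inner_eq_one (U : G ≃ₗᵢ[ℂ] G)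
    (hU : ‖⟪x, U x⟫‖ = 1) : U x = ⟪x, U x⟫ • x ∧ U y = ⟪y, U y⟫ • y := by
  have hx : ‖x‖ = 1 := by simpa using hxy.norm_eq_one 0
  have hxy0 : ⟪x, y⟫ = 0 := by simpa using hxy.inner_eq_zero (i := 0) (j := 1) (by decide)
  have hUx : U x = ⟪x, U x⟫ • x := by
    have hparseval := norm_sq_inner_add_norm_sq_inner_of_finrank_eq_two h2 hxy (U x)
    rw [U.norm_map, hx, hU] at hparseval
    have hf : ⟪y, U x⟫ = 0 := by simpa using hparseval
    simpa [hf] using eq_inner_smul_add_inner_smul_of_finrank_eq_two h2 hxy (U x)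
  have hg : ⟪x, U y⟫ = 0 := by
    have h := U.inner_map_map x y
    rw [hxy0, hUx, inner_smul_left] at h
    exact (mul_eq_zero.mp h).resolve_left
      (by rw [map_eq_zero, ← norm_eq_zero, hU]; exact one_ne_zero)
  refine ⟨hUx, ?_⟩
  simpa [hg] using eq_inner_smul_add_inner_smul_of_finrank_eq_two h2 hxy (U y)

end TwoDimensional

section MultiplicativeSequence

lemma eq_pow_of_map_add {M : Type*} [Monoid M] {a : ℕ+ → M}
    (ha : ∀ s t, a (s + t) = a s * a t) (t : ℕ+) : a t = a 1 ^ (t : ℕ) := by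
  induction t using PNat.recOn with
  | one => simp
  | succ t ih => rw [ha, ih, PNat.add_coe, PNat.one_coe, pow_succ]

lemma mul_map_one_eq_of_map_add {M : Type*} [CommMonoid M] {a d : ℕ+ → M}
    (ha : ∀ s t, a (s + t) = a s * a t) (hd : ∀ s t, d (s + t) = d s * a t) (t : ℕ+) :
    d t * a 1 = d 1 * a t := by
  induction t using PNat.recOn with
  | one => rfl
  | succ t ih => rw [hd, ha, mul_right_comm, ih, mul_assoc]

open Complex in
lemma exists_exp_of_map_add {a d : ℕ+ → ℂ}
    (ha : ∀ s t, a (s + t) = a s * a t) (hd : ∀ s t, d (s + t) = d s * a t)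
    (ha₁ : ‖a 1‖ = 1) (hd₁ : ‖d 1‖ = 1) :
    ∃ c b : ℝ, ∀ t : ℕ+,
      a t = exp (I * c * (t : ℕ)) ∧ d t = exp (I * b) * exp (I * c * (t : ℕ)) := by
  obtain ⟨c, hc⟩ := (norm_eq_one_iff (a 1)).mp ha₁
  obtain ⟨b, hb⟩ := (norm_eq_one_iff (d 1 / a 1)).mp (by rw [norm_div, ha₁, hd₁, div_one])
  have ha₁0 : a 1 ≠ 0 := by rw [← norm_ne_zero_iff, ha₁]; exact one_ne_zero
  have hat : ∀ t : ℕ+, a t = exp (I * c * (t : ℕ)) := fun t => by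
    rw [eq_pow_of_map_add ha, ← hc, ← exp_nat_mul]
    ring_nf
  refine ⟨c, b, fun t => ⟨hat t, ?_⟩⟩
  calc d t = d t * a 1 / a 1 := (mul_div_cancel_right₀ _ ha₁0).symm
    _ = d 1 / a 1 * a t := by rw [mul_map_one_eq_of_map_add ha hd]; ring
    _ = exp (I * b) * exp (I * c * (t : ℕ)) := by rw [← hb, hat, mul_comm (b : ℂ)]

end MultiplicativeSequence

namespace SubprodHilbert

section Intertwines

variable {E : ℕ+ → Type*} [∀ t, NormedAddCommGroup (E t)] [∀ t, InnerProductSpace ℂ (E t)]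
  {β : ∀ s t : ℕ+, E (s + t) →ₗᵢ[ℂ] (E s ⊗[ℂ] E t)}

lemma Intertwines.inner_map_eq_mul {θ : ∀ t : ℕ+, E t ≃ₗᵢ[ℂ] E t}
    (hθ : Intertwines E E β β θ)
    {s t : ℕ+} {u v : E (s + t)} {u₁ v₁ : E s} {u₂ v₂ : E t}
    (hu : β s t u = u₁ ⊗ₜ[ℂ] u₂) (hv : β s t v = v₁ ⊗ₜ[ℂ] v₂) :
    (inner ℂ u (θ (s + t) v) : ℂ) = inner ℂ u₁ (θ s v₁) * inner ℂ u₂ (θ t v₂) := by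
  rw [← (β s t).inner_map_map, hθ, hu, hv, TensorProduct.map_tmul]
  exact inner_tmul _ _ _ _

end Intertwines

theorem statement6_general
    (E : ℕ+ → Type*) [∀ t, NormedAddCommGroup (E t)] [∀ t, InnerProductSpace ℂ (E t)]
    (hdim : ∀ t, Module.finrank ℂ (E t) = 2)
    (β : ∀ s t : ℕ+, E (s + t) →ₗᵢ[ℂ] (E s ⊗[ℂ] E t))
    (x y : ∀ t : ℕ+, E t) (hxy : IsBasisE4 E β x y)
    (θ : ∀ t : ℕ+, E t ≃ₗᵢ[ℂ] E t) (hθ : Intertwines E E β β θ) :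
    ∃ c b : ℝ, ∀ t : ℕ+,
      θ t (x t) = Complex.exp (Complex.I * (c : ℂ) * ((t : ℕ) : ℂ)) • x t ∧
      θ t (y t) = (Complex.exp (Complex.I * (b : ℂ)) *
        Complex.exp (Complex.I * (c : ℂ) * ((t : ℕ) : ℂ))) • y t := by
  obtain ⟨hx, hy, hxy0, hβx, hβy⟩ := hxy
  have hon : ∀ t, Orthonormal ℂ ![x t, y t] := fun t => by simp [hx t, hy t, hxy0 t]
  set a : ℕ+ → ℂ := fun t => inner ℂ (x t) (θ t (x t))
  set f : ℕ+ → ℂ := fun t => inner ℂ (y t) (θ t (x t))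
  set d : ℕ+ → ℂ := fun t => inner ℂ (y t) (θ t (y t))
  have ha : ∀ s t, a (s + t) = a s * a t := fun s t => hθ.inner_map_eq_mul (hβx s t) (hβx s t)
  have hf : ∀ s t, f (s + t) = f s * a t := fun s t => hθ.inner_map_eq_mul (hβy s t) (hβx s t)
  have hd : ∀ s t, d (s + t) = d s * a t := fun s t => hθ.inner_map_eq_mul (hβy s t) (hβy s t)
  have hparseval : ∀ t, ‖a t‖ ^ 2 + ‖f t‖ ^ 2 = 1 := fun t => by
    simpa [hx t] using
      norm_sq_inner_add_norm_sq_inner_of_finrank_eq_two (hdim t) (hon t) (θ t (x t))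
  -- `1 = |a_{2t}|² + |f_{2t}|² = |a_t|² (|a_t|² + |f_t|²) = |a_t|²`
  have ha_norm : ∀ t, ‖a t‖ = 1 := fun t => by
    have h2t := hparseval (t + t)
    rw [ha, hf, norm_mul, norm_mul] at h2t
    nlinarith [hparseval t, norm_nonneg (a t)]
  have hθxy : ∀ t, θ t (x t) = a t • x t ∧ θ t (y t) = d t • y t := fun t =>
    (θ t).map_eq_smul_of_norm_inner_eq_one (hdim t) (hon t) (ha_norm t)
  have hd_norm : ‖d 1‖ = 1 := by
    simpa [(θ 1).norm_map, hy, norm_smul] using (congrArg norm (hθxy 1).2).symm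
  obtain ⟨c, b, hcb⟩ := exists_exp_of_map_add ha hd (ha_norm 1) hd_norm
  exact ⟨c, b, fun t => ⟨by rw [(hθxy t).1, (hcb t).1], by rw [(hθxy t).2, (hcb t).2]⟩⟩

/-- **Lemma 1.11, case `𝓔₄`.** -/
theorem statement6
    (E : ℕ+ → Type*) [∀ t, NormedAddCommGroup (E t)] [∀ t, InnerProductSpace ℂ (E t)]
    (hdim : ∀ t, Module.finrank ℂ (E t) = 2)
    (β : ∀ s t : ℕ+, E (s + t) →ₗᵢ[ℂ] (E s ⊗[ℂ] E t))
    (hassoc : SubprodAssoc E β)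
    (x y : ∀ t : ℕ+, E t) (hxy : IsBasisE4 E β x y)
    (θ : ∀ t : ℕ+, E t ≃ₗᵢ[ℂ] E t) (hθ : Intertwines E E β β θ) :
    ∃ c b : ℝ, ∀ t : ℕ+,
      θ t (x t) = Complex.exp (Complex.I * (c : ℂ) * ((t : ℕ) : ℂ)) • x t ∧
      θ t (y t) = (Complex.exp (Complex.I * (b : ℂ)) *
        Complex.exp (Complex.I * (c : ℂ) * ((t : ℕ) : ℂ))) • y t :=
  statement6_general E hdim β x y hxy θ hθ

end SubprodHilbert
end
end
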